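/- The number of (m+1)-tuples (e_0,...,e_m) of non-negative integers summing to t such that the multinomial coefficient t!/(e_0!⋯e_m!) is NOT divisible by a prime p equals Π_{σ∈ℕ} C(m + t_σ, t_σ), where t_σ are the base-p digits of t. -/

import Mathlib

/-!
Legendre's formula in the form `v_p(n!) = v_p(⌊n/p⌋!) + ⌊n/p⌋` shows that a multinomial
coefficient `(e_0 + ⋯ + e_m)! / (e_0! ⋯ e_m!)` is prime to `p` exactly when adding the `e_j`
produces no carry out of the last base-`p` digit, `Σ ⌊e_j/p⌋ = ⌊t/p⌋`, and the multinomial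
coefficient of the `⌊e_j/p⌋` is again prime to `p`. Hence `e ↦ (e mod p, ⌊e/p⌋)` is a bijection
from the admissible tuples for `t` onto (tuples summing to `t mod p`) × (admissible tuples for
`⌊t/p⌋`), and by stars and bars there are `C(m + t₀, t₀)` tuples in the first factor; induction
on the number of digits gives the product.
-/

def digit (p x σ : ℕ) : ℕ := x / p ^ σ % p

open Finset Nat

theorem sum_div_le_div_sum {ι : Type*} (s : Finset ι) (e : ι → ℕ) (q : ℕ) :
    ∑ i ∈ s, e i / q ≤ (∑ i ∈ s, e i) / q := by
  rcases q.eq_zero_or_pos with rfl | hq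
  · simp
  rw [Nat.le_div_iff_mul_le hq, sum_mul]
  exact sum_le_sum fun i _ => div_mul_le_self _ _

section PadicVal

variable {p : ℕ} [hp : Fact p.Prime]

theorem padicValNat_prod {ι : Type*} (s : Finset ι) (f : ι → ℕ) (hf : ∀ i ∈ s, f i ≠ 0) :
    padicValNat p (∏ i ∈ s, f i) = ∑ i ∈ s, padicValNat p (f i) := by
  simp only [← factorization_def _ hp.out, factorization_prod hf, Finsupp.coe_finsetSum,
    Finset.sum_apply]

theorem padicValNat_factorial_mono {a b : ℕ} (h : a ≤ b) :
    padicValNat p a ! ≤ padicValNat p b ! :=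
  (padicValNat_dvd_iff_le (factorial_ne_zero b)).1
    (pow_padicValNat_dvd.trans (factorial_dvd_factorial h))

theorem padicValNat_factorial_eq_add_div (n : ℕ) :
    padicValNat p n ! = padicValNat p (n / p)! + n / p := by
  rw [← padicValNat_mul_div_factorial, padicValNat_factorial_mul]

theorem padicValNat_factorial_sum {ι : Type*} (s : Finset ι) (e : ι → ℕ) :
    padicValNat p (∑ i ∈ s, e i)! =
      ∑ i ∈ s, padicValNat p (e i)! + padicValNat p (multinomial s e) := by
  rw [← multinomial_spec, padicValNat.mul (prod_ne_zero_iff.2 fun i _ => factorial_ne_zero _)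
    (multinomial_pos s e).ne', padicValNat_prod _ _ fun i _ => factorial_ne_zero _]

theorem not_dvd_multinomial_iff {ι : Type*} (s : Finset ι) (e : ι → ℕ) :
    ¬ p ∣ multinomial s e ↔
      ∑ i ∈ s, e i / p = (∑ i ∈ s, e i) / p ∧ ¬ p ∣ multinomial s (fun i => e i / p) := by
  -- With `T = Σ e_i` and `T' = Σ ⌊e_i/p⌋ ≤ ⌊T/p⌋`, the two Legendre identities combine to
  -- `v(multinomial e) + T' + v(T'!) = ⌊T/p⌋ + v(⌊T/p⌋!) + v(multinomial ⌊e/p⌋)`.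
  have hv := padicValNat_factorial_sum (p := p) s e
  have hv' := padicValNat_factorial_sum (p := p) s (fun i => e i / p)
  simp only [padicValNat_factorial_eq_add_div (p := p) (∑ i ∈ s, e i),
    padicValNat_factorial_eq_add_div (p := p) (e _), sum_add_distrib] at hv
  simp only [dvd_iff_padicValNat_ne_zero (multinomial_pos _ _).ne', not_not]
  rcases (sum_div_le_div_sum s e p).lt_or_eq with hlt | heq
  · have := padicValNat_factorial_mono (p := p) hlt.le
    omega
  · rw [heq] at hv'
    omega

end PadicVal

theorem digit_zero (p x : ℕ) : digit p x 0 = x % p := by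
  simp [digit]

theorem digit_succ (p x σ : ℕ) : digit p x (σ + 1) = digit p (x / p) σ := by
  simp [digit, Nat.div_div_eq_div_mul, pow_succ']

theorem card_antidiagonalTuple (k n : ℕ) :
    #(Finset.Nat.antidiagonalTuple k n) = (k + n - 1).choose n := by
  have h := card_finsuppAntidiag_nat_eq_choose (s := (univ : Finset (Fin k))) n
  rwa [finsuppAntidiag, card_map, card_attach, piAntidiag_univ_fin_eq_antidiagonalTuple,
    Finset.card_univ, Fintype.card_fin] at h

theorem le_of_mem_antidiagonalTuple {k n : ℕ} {a : Fin k → ℕ}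
    (ha : a ∈ Finset.Nat.antidiagonalTuple k n) (i : Fin k) : a i ≤ n :=
  Finset.Nat.mem_antidiagonalTuple.1 ha ▸ single_le_sum (fun _ _ => zero_le _) (mem_univ i)

def multinomialNotDvdTuples (p k t : ℕ) : Finset (Fin k → ℕ) :=
  {e ∈ Finset.Nat.antidiagonalTuple k t | ¬ p ∣ multinomial univ e}

section MultinomialNotDvdTuples

variable {p : ℕ} [hp : Fact p.Prime] {k : ℕ}

theorem multinomialNotDvdTuples_zero_right : multinomialNotDvdTuples p k 0 = {0} := by
  simp [multinomialNotDvdTuples, Finset.Nat.antidiagonalTuple_zero_right, multinomial,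
    hp.out.ne_one]

theorem mem_multinomialNotDvdTuples_iff {t : ℕ} {e : Fin k → ℕ} :
    e ∈ multinomialNotDvdTuples p k t ↔
      (fun i => e i % p) ∈ Finset.Nat.antidiagonalTuple k (t % p) ∧
        (fun i => e i / p) ∈ multinomialNotDvdTuples p k (t / p) := by
  simp only [multinomialNotDvdTuples, mem_filter, Finset.Nat.mem_antidiagonalTuple]
  have he : ∑ i, e i = ∑ i, e i % p + p * ∑ i, e i / p := by
    simp only [mul_sum, ← sum_add_distrib, Nat.mod_add_div]
  have ht := (Nat.mod_add_div t p).symm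
  constructor
  · rintro ⟨rfl, hnd⟩
    obtain ⟨hdiv, hnd'⟩ := (not_dvd_multinomial_iff univ e).1 hnd
    refine ⟨?_, hdiv, hnd'⟩
    rw [hdiv] at he
    exact Nat.add_right_cancel (he.symm.trans ht)
  · rintro ⟨hmod, hdiv, hnd'⟩
    obtain rfl : ∑ i, e i = t := by rw [he, ht, hmod, hdiv]
    exact ⟨rfl, (not_dvd_multinomial_iff univ e).2 ⟨hdiv, hnd'⟩⟩

theorem card_multinomialNotDvdTuples_eq_mul (t : ℕ) :
    #(multinomialNotDvdTuples p k t) =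
      #(Finset.Nat.antidiagonalTuple k (t % p)) * #(multinomialNotDvdTuples p k (t / p)) := by
  rw [← card_product]
  have hlt : ∀ a ∈ Finset.Nat.antidiagonalTuple k (t % p), ∀ i, a i < p := fun a ha i =>
    (le_of_mem_antidiagonalTuple ha i).trans_lt (Nat.mod_lt t hp.out.pos)
  apply card_nbij' (fun e => (fun i => e i % p, fun i => e i / p))
    (fun ab i => ab.1 i + p * ab.2 i)
  · intro e he
    simpa using mem_multinomialNotDvdTuples_iff.1 he
  · rintro ⟨a, b⟩ hab
    obtain ⟨ha, hb⟩ := mem_product.1 hab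
    refine mem_multinomialNotDvdTuples_iff.2 ?_
    simpa [Nat.add_mul_div_left _ _ hp.out.pos, Nat.div_eq_of_lt (hlt a ha _),
      Nat.mod_eq_of_lt (hlt a ha _)] using ⟨ha, hb⟩
  · intro e _
    simp [Nat.mod_add_div]
  · rintro ⟨a, b⟩ hab
    obtain ⟨ha, -⟩ := mem_product.1 hab
    ext i
    · simp [Nat.mod_eq_of_lt (hlt a ha i)]
    · simp [Nat.add_mul_div_left _ _ hp.out.pos, Nat.div_eq_of_lt (hlt a ha i)]

theorem card_multinomialNotDvdTuples_eq_prod_digit (m : ℕ) {t N : ℕ} (ht : t < p ^ N) :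
    #(multinomialNotDvdTuples p (m + 1) t) =
      ∏ σ ∈ range N, (m + digit p t σ).choose (digit p t σ) := by
  induction N generalizing t with
  | zero =>
    obtain rfl : t = 0 := by simpa using ht
    simp [multinomialNotDvdTuples_zero_right]
  | succ N ih =>
    have htp : t / p < p ^ N := Nat.div_lt_of_lt_mul (by rwa [← pow_succ'])
    rw [card_multinomialNotDvdTuples_eq_mul, ih htp, card_antidiagonalTuple, prod_range_succ',
      digit_zero, show m + 1 + t % p - 1 = m + t % p by omega, mul_comm]
    simp only [digit_succ]

end MultinomialNotDvdTuples

theorem card_multinomial_not_dvd_general (p : ℕ) (hp : p.Prime) (m t : ℕ) :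
    ((Finset.Nat.antidiagonalTuple (m + 1) t).filter fun e =>
        ¬ p ∣ Nat.multinomial Finset.univ e).card
      = ∏ σ ∈ Finset.range (t + 1), Nat.choose (m + digit p t σ) (digit p t σ) := by
  have := Fact.mk hp
  exact card_multinomialNotDvdTuples_eq_prod_digit m
    ((lt_add_one t).trans (Nat.lt_pow_self hp.one_lt))

/-- The number of `(m+1)`-tuples `(e_0,…,e_m)` of non-negative integers summing to `t`
whose multinomial coefficient `t!/(e_0!⋯e_m!)` is NOT divisible by the prime `p` equals
`∏_σ C(m + t_σ, t_σ)`, where `t_σ` are the base-`p` digits of `t`. (Digits with index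
`σ > t` vanish, and `C(m+0,0) = 1`, so the product over `σ < t+1` is the full product.) -/
theorem card_multinomial_not_dvd (p : ℕ) (hp : p.Prime) (m t : ℕ) (hm : 1 ≤ m) :
    ((Finset.Nat.antidiagonalTuple (m + 1) t).filter fun e =>
        ¬ p ∣ Nat.multinomial Finset.univ e).card
      = ∏ σ ∈ Finset.range (t + 1), Nat.choose (m + digit p t σ) (digit p t σ) :=
  card_multinomial_not_dvd_general p hp m t
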